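/- Let I be a small category, p : I → Cat a functor, and K = ∫p its Grothendieck construction (so K → I is the associated opfibration). Suppose q : K → D is a functor into a cocomplete category D. Then colim_K q ≅ colim_{i ∈ I} colim_{p(i)} q_i, where q_i is the restriction of q to the fiber p(i), and the functoriality in i is induced by the cocartesian transition functors. -/

import Mathlib

open CategoryTheory Limits

/-- For a functor p : I ⥤ Cat with Grothendieck construction K = ∫p, and a functor
q : K ⥤ D into a cocomplete category, the colimit of q decomposes as the colimit over
i ∈ I of the fiberwise colimits colim_{p(i)} q_i, where the functoriality in i is the
one induced by the cocartesian transition functors (`fiberwiseColimit`). -/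
theorem stmt_18 {I : Type u} [SmallCategory I] (p : I ⥤ Cat.{u, u})
    {D : Type v} [Category.{w} D] [HasColimitsOfSize.{u, u} D]
    (q : Grothendieck p ⥤ D) :
    (∀ i : I, (fiberwiseColimit q).obj i = colimit (Grothendieck.ι p i ⋙ q)) ∧
    Nonempty (colimit q ≅ colimit (fiberwiseColimit q)) :=
  ⟨fun _ => rfl, ⟨(colimitFiberwiseColimitIso q).symm⟩⟩
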